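/- For an algebraic Kähler curvature tensor R acting on r-forms, one has Σ_a i(e_a)(R_+(e_a)φ) = −F(φ) and Σ_a θ^a ∧ (R_−(e_a)φ) = −F(φ) for every r-form φ. -/

import Mathlib

/-!
The key tool is the Cartan formula `i(X)(ω ∧ φ) = ω(X) φ - ω ∧ i(X) φ` for a 1-form `ω`.
In `∑ₐ i(eₐ) R₊(eₐ) φ` it splits off `∑ₐ R(eₐ, eₐ) φ`, which vanishes since `R` is antisymmetric,
and what remains is `-F(φ)` with the summation indices swapped. In `∑ₐ θᵃ ∧ R₋(eₐ) φ`,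
antisymmetry turns `R(eₐ, e_b)` into `-R(e_b, eₐ)` directly.
The Cartan formula follows from the expansion
`(ω ∧ φ)(v₀, …, vᵣ) = ∑ᵢ (-1)ⁱ ω(vᵢ) φ(v₀, …, v̂ᵢ, …, vᵣ)`, obtained by indexing the shuffles
of `Fin 1 ⊕ Fin r` by the position that the single left slot is sent to.
-/

open scoped RealInnerProductSpace
open Finset

noncomputable section

/-- `n`-forms on `V`: alternating `n`-linear maps `V^n → ℝ`. -/
abbrev Form (V : Type*) [AddCommGroup V] [Module ℝ V] (n : ℕ) :=
  AlternatingMap ℝ V ℝ (Fin n)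

variable {V : Type*} [NormedAddCommGroup V] [InnerProductSpace ℝ V]

/-- The metric dual covector `X♭`, as a 1-form: `X♭(Y) = ⟪X, Y⟫`. -/
def flat (X : V) : Form V 1 :=
  AlternatingMap.ofSubsingleton ℝ V ℝ 0 ((innerSL ℝ X).toLinearMap)

/-- Interior product `i(X)` on forms of positive degree. -/
def iprodS {n : ℕ} (X : V) (φ : Form V (n + 1)) : Form V n :=
  φ.curryLeft X

/-- Wedge product of a 1-form with an `n`-form. -/
def eps {n : ℕ} (ω : Form V 1) (φ : Form V n) : Form V (n + 1) :=
  AlternatingMap.domDomCongr (finSumFinEquiv.trans (finCongr (Nat.add_comm 1 n)))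
    ((TensorProduct.lid ℝ ℝ).toLinearMap.compAlternatingMap (ω.domCoprod φ))

/-- The Ricci endomorphism `ρ(X) = ∑ₐ R(X, eₐ) eₐ`. -/
def ric {q : ℕ} (R : V →ₗ[ℝ] V →ₗ[ℝ] (V →ₗ[ℝ] V))
    (e : OrthonormalBasis (Fin q) ℝ V) (X : V) : V :=
  ∑ a, R X (e a) (e a)

/-- `R₊(X) φ = ∑ₐ θᵃ ∧ (R(X, eₐ) φ)`. -/
def Rp {q : ℕ} (act : ∀ n : ℕ, (V →ₗ[ℝ] V) → Form V n → Form V n)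
    (R : V →ₗ[ℝ] V →ₗ[ℝ] (V →ₗ[ℝ] V)) (e : OrthonormalBasis (Fin q) ℝ V)
    {n : ℕ} (X : V) (φ : Form V n) : Form V (n + 1) :=
  ∑ a, eps (flat (e a)) (act n (R X (e a)) φ)

/-- `R₋(X) φ = ∑ₐ i(eₐ) (R(X, eₐ) φ)`. -/
def Rm {q : ℕ} (act : ∀ n : ℕ, (V →ₗ[ℝ] V) → Form V n → Form V n)
    (R : V →ₗ[ℝ] V →ₗ[ℝ] (V →ₗ[ℝ] V)) (e : OrthonormalBasis (Fin q) ℝ V)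
    {n : ℕ} (X : V) (φ : Form V (n + 1)) : Form V n :=
  ∑ a, iprodS (e a) (act (n + 1) (R X (e a)) φ)

/-- The curvature endomorphism `F(φ) = ∑_{a,b} θᵃ ∧ i(e_b) (R(e_b, eₐ) φ)`. -/
def Fop {q : ℕ} (act : ∀ n : ℕ, (V →ₗ[ℝ] V) → Form V n → Form V n)
    (R : V →ₗ[ℝ] V →ₗ[ℝ] (V →ₗ[ℝ] V)) (e : OrthonormalBasis (Fin q) ℝ V)
    {n : ℕ} (φ : Form V (n + 1)) : Form V (n + 1) :=
  ∑ a, ∑ b, eps (flat (e a)) (iprodS (e b) (act (n + 1) (R (e b) (e a)) φ))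

namespace Equiv.Perm

theorem modSumCongr_mk_eq_mk_iff_apply_inl_zero {ι : Type*} [Finite ι]
    (p q : Perm (Fin 1 ⊕ ι)) :
    (Quotient.mk'' p : ModSumCongr (Fin 1) ι) = Quotient.mk'' q ↔
      p (Sum.inl 0) = q (Sum.inl 0) := by
  rw [Quotient.eq'', QuotientGroup.leftRel_apply]
  constructor
  · rintro ⟨⟨sl, sr⟩, h⟩
    rw [← mul_inv_cancel_left p q, ← h]
    simp [Subsingleton.elim (sl 0) 0]
  · intro h
    refine mem_sumCongrHom_range_of_perm_mapsTo_inl ?_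
    rintro _ ⟨k, rfl⟩
    exact ⟨0, by simp [Subsingleton.elim k 0, ← h]⟩

end Equiv.Perm

namespace AlternatingMap

variable {R : Type*} {M N₁ N₂ : Type*} [CommSemiring R] [AddCommGroup N₁] [Module R N₁]
  [AddCommGroup N₂] [Module R N₂] [AddCommMonoid M] [Module R M] {n : ℕ}

open scoped TensorProduct in
theorem domCoprod_finOne_apply (a : M [⋀^Fin 1]→ₗ[R] N₁) (b : M [⋀^Fin n]→ₗ[R] N₂)
    (v : Fin (n + 1) → M) :
    a.domCoprod b (v ∘ finSumFinEquiv.trans (finCongr (Nat.add_comm 1 n))) =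
      ∑ i : Fin (n + 1), (-1 : ℤ) ^ (i : ℕ) • (a ![v i] ⊗ₜ b (i.removeNth v)) := by
  set κ : Fin 1 ⊕ Fin n ≃ Fin (n + 1) := finSumFinEquiv.trans (finCongr (Nat.add_comm 1 n))
  have hκ_inl : κ (Sum.inl 0) = 0 := rfl
  have hκ_inr (j : Fin n) : κ (Sum.inr j) = j.succ := Fin.ext (by simp [κ])
  -- `σ i` moves the first slot to position `i`, keeping the others in order.
  let σ (i : Fin (n + 1)) : Equiv.Perm (Fin 1 ⊕ Fin n) := κ.symm.permCongr i.cycleRange.symm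
  have hσ_inl (i) : σ i (Sum.inl 0) = κ.symm i := by
    simp [σ, Equiv.permCongr_apply, hκ_inl, Fin.cycleRange_symm_zero]
  have hσ_inr (i) (j : Fin n) : σ i (Sum.inr j) = κ.symm (i.succAbove j) := by
    simp [σ, Equiv.permCongr_apply, hκ_inr, Fin.cycleRange_symm_succ]
  have hbij : Function.Bijective fun i => (Quotient.mk'' (σ i) : Equiv.Perm.ModSumCongr _ _) := by
    refine ⟨fun i j hij => ?_, fun q => ?_⟩
    · rw [Equiv.Perm.modSumCongr_mk_eq_mk_iff_apply_inl_zero, hσ_inl, hσ_inl] at hij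
      exact κ.symm.injective hij
    · induction q using Quotient.inductionOn' with | h p => ?_
      refine ⟨κ (p (Sum.inl 0)), ?_⟩
      rw [Equiv.Perm.modSumCongr_mk_eq_mk_iff_apply_inl_zero, hσ_inl, Equiv.symm_apply_apply]
  rw [← coe_multilinearMap, domCoprod_coe, _root_.sum_apply]
  refine (Fintype.sum_bijective _ hbij _ _ fun i => ?_).symm
  have hsign : Equiv.Perm.sign (σ i) = (-1) ^ (i : ℕ) := by
    simp [σ, Equiv.Perm.sign_permCongr, Fin.sign_cycleRange]
  have ha : (fun k => v (κ (σ i (Sum.inl k)))) = ![v i] := by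
    funext k
    simp [Subsingleton.elim k 0, hσ_inl]
  have hb : (fun j => v (κ (σ i (Sum.inr j)))) = i.removeNth v := by
    funext j
    simp [hσ_inr, Fin.removeNth]
  rw [domCoprod.summand_mk'', hsign, _root_.smul_apply,
    MultilinearMap.domDomCongr_apply, MultilinearMap.domCoprod_apply]
  simp [ha, hb, Units.smul_def]

end AlternatingMap

section Forms

variable {n : ℕ}

theorem eps_apply (ω : Form V 1) (φ : Form V n) (v : Fin (n + 1) → V) :
    eps ω φ v = ∑ i : Fin (n + 1), (-1) ^ (i : ℕ) * (ω ![v i] * φ (i.removeNth v)) := by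
  rw [eps, AlternatingMap.domDomCongr_apply, LinearMap.compAlternatingMap_apply,
    AlternatingMap.domCoprod_finOne_apply, map_sum]
  refine Finset.sum_congr rfl fun i _ => ?_
  rw [LinearEquiv.coe_coe, map_zsmul, TensorProduct.lid_tmul, zsmul_eq_mul, smul_eq_mul]
  push_cast
  ring

theorem eps_add (ω : Form V 1) (φ ψ : Form V n) : eps ω (φ + ψ) = eps ω φ + eps ω ψ := by
  ext v
  simp [eps_apply, mul_add, Finset.sum_add_distrib]

theorem eps_sum {ι : Type*} (ω : Form V 1) (s : Finset ι) (φ : ι → Form V n) :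
    eps ω (∑ i ∈ s, φ i) = ∑ i ∈ s, eps ω (φ i) :=
  map_sum (AddMonoidHom.mk' (eps ω) (eps_add ω)) φ s

theorem eps_neg (ω : Form V 1) (φ : Form V n) : eps ω (-φ) = -eps ω φ :=
  map_neg (AddMonoidHom.mk' (eps ω) (eps_add ω)) φ

theorem iprodS_apply (X : V) (φ : Form V (n + 1)) (v : Fin n → V) :
    iprodS X φ v = φ (Fin.cons X v) :=
  rfl

theorem iprodS_sum {ι : Type*} (X : V) (s : Finset ι) (φ : ι → Form V (n + 1)) :
    iprodS X (∑ i ∈ s, φ i) = ∑ i ∈ s, iprodS X (φ i) :=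
  map_sum (AlternatingMap.curryLeftLinearMap.flip X) φ s

theorem iprodS_neg (X : V) (φ : Form V (n + 1)) : iprodS X (-φ) = -iprodS X φ :=
  map_neg (AlternatingMap.curryLeftLinearMap.flip X) φ

theorem iprodS_eps (ω : Form V 1) (X : V) (φ : Form V (n + 1)) :
    iprodS X (eps ω φ) = ω ![X] • φ - eps ω (iprodS X φ) := by
  ext v
  have hcons (j : Fin (n + 1)) : j.succ.removeNth (Fin.cons X v : Fin (n + 2) → V) =
      (Fin.cons X (j.removeNth v) : Fin (n + 1) → V) :=
    Fin.cons_comp_succ_succAbove X v j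
  rw [AlternatingMap.sub_apply, AlternatingMap.smul_apply, iprodS_apply, eps_apply,
    Fin.sum_univ_succ, eps_apply]
  simp [hcons, iprodS_apply, pow_succ, sub_eq_add_neg]

theorem flat_apply (X Y : V) : flat X ![Y] = ⟪X, Y⟫ :=
  rfl

theorem act_zero_of_derivation {act : ∀ n : ℕ, (V →ₗ[ℝ] V) → Form V n → Form V n}
    (hact : ∀ (n : ℕ) (A : V →ₗ[ℝ] V) (φ : Form V n) (v : Fin n → V),
      act n A φ v = -∑ k, φ (Function.update v k (A (v k))))
    (n : ℕ) (φ : Form V n) : act n 0 φ = 0 := by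
  ext v
  simp [hact]

theorem act_neg_of_derivation {act : ∀ n : ℕ, (V →ₗ[ℝ] V) → Form V n → Form V n}
    (hact : ∀ (n : ℕ) (A : V →ₗ[ℝ] V) (φ : Form V n) (v : Fin n → V),
      act n A φ v = -∑ k, φ (Function.update v k (A (v k))))
    (n : ℕ) (A : V →ₗ[ℝ] V) (φ : Form V n) : act n (-A) φ = -act n A φ := by
  ext v
  simp [hact]

variable {q : ℕ} (act : ∀ n : ℕ, (V →ₗ[ℝ] V) → Form V n → Form V n)
  (R : V →ₗ[ℝ] V →ₗ[ℝ] (V →ₗ[ℝ] V)) (e : OrthonormalBasis (Fin q) ℝ V)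

theorem iprodS_Rp (X : V) (φ : Form V (n + 1)) (a : Fin q) :
    iprodS (e a) (Rp act R e X φ) =
      act (n + 1) (R X (e a)) φ -
        ∑ b, eps (flat (e b)) (iprodS (e a) (act (n + 1) (R X (e b)) φ)) := by
  classical
  simp only [Rp, iprodS_sum, iprodS_eps, flat_apply, e.inner_eq_ite, ite_smul, one_smul,
    zero_smul, Finset.sum_sub_distrib, Finset.sum_ite_eq', Finset.mem_univ, if_true]

theorem sum_iprodS_Rp (hR : ∀ X, R X X = 0) (hact : ∀ n φ, act n 0 φ = 0)
    (φ : Form V (n + 1)) :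
    ∑ a, iprodS (e a) (Rp act R e (e a) φ) = -Fop act R e φ := by
  simp only [iprodS_Rp, hR, hact, zero_sub, Finset.sum_neg_distrib, Fop]
  rw [Finset.sum_comm]

theorem sum_eps_Rm (hR : ∀ X Y, R X Y = -R Y X)
    (hact : ∀ n A φ, act n (-A) φ = -act n A φ) (φ : Form V (n + 1)) :
    ∑ a, eps (flat (e a)) (Rm act R e (e a) φ) = -Fop act R e φ := by
  simp only [Rm, Fop, eps_sum, ← Finset.sum_neg_distrib]
  refine Finset.sum_congr rfl fun a _ => Finset.sum_congr rfl fun b _ => ?_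
  rw [hR, hact, iprodS_neg, eps_neg]

end Forms

theorem sum_interior_Rp_and_sum_wedge_Rm_eq_neg_F_general
    {m : ℕ}
    (e : OrthonormalBasis (Fin (2 * m)) ℝ V)
    (R : V →ₗ[ℝ] V →ₗ[ℝ] (V →ₗ[ℝ] V))
    (hRskew : ∀ X Y : V, R X Y = -R Y X)
    (act : ∀ n : ℕ, (V →ₗ[ℝ] V) → Form V n → Form V n)
    (hact : ∀ (n : ℕ) (A : V →ₗ[ℝ] V) (φ : Form V n) (v : Fin n → V),
      act n A φ v = -∑ k, φ (Function.update v k (A (v k)))) :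
    (∀ (r : ℕ) (φ : Form V (r + 1)),
        ∑ a, iprodS (e a) (Rp act R e (e a) φ) = -Fop act R e φ) ∧
    (∀ (r : ℕ) (φ : Form V (r + 1)),
        ∑ a, eps (flat (e a)) (Rm act R e (e a) φ) = -Fop act R e φ) := by
  have := IsAddTorsionFree.of_isTorsionFree ℝ (V →ₗ[ℝ] V)
  have hRdiag (X : V) : R X X = 0 := self_eq_neg.mp (hRskew X X)
  exact ⟨fun _ φ => sum_iprodS_Rp act R e hRdiag (act_zero_of_derivation hact) φ,
    fun _ φ => sum_eps_Rm act R e hRskew (act_neg_of_derivation hact) φ⟩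

/-- For an algebraic Kähler curvature tensor `R` acting on `r`-forms,
`∑ₐ i(eₐ)(R₊(eₐ)φ) = -F(φ)` and `∑ₐ θᵃ ∧ (R₋(eₐ)φ) = -F(φ)` for every `r`-form `φ`. -/
theorem sum_interior_Rp_and_sum_wedge_Rm_eq_neg_F
    {m : ℕ} (hm : 1 ≤ m)
    (J : V →ₗ[ℝ] V) (hJO : ∀ x y : V, ⟪J x, J y⟫ = ⟪x, y⟫)
    (hJ2 : ∀ x : V, J (J x) = -x)
    (e : OrthonormalBasis (Fin (2 * m)) ℝ V)
    (R : V →ₗ[ℝ] V →ₗ[ℝ] (V →ₗ[ℝ] V))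
    (hRskew : ∀ X Y : V, R X Y = -R Y X)
    (hRskewadj : ∀ X Y u v : V, ⟪R X Y u, v⟫ = -⟪u, R X Y v⟫)
    (hRbianchi : ∀ X Y Z : V, R X Y Z + R Y Z X + R Z X Y = 0)
    (hRJ : ∀ X Y v : V, R X Y (J v) = J (R X Y v))
    (hRJJ : ∀ X Y : V, R (J X) (J Y) = R X Y)
    (act : ∀ n : ℕ, (V →ₗ[ℝ] V) → Form V n → Form V n)
    (hact : ∀ (n : ℕ) (A : V →ₗ[ℝ] V) (φ : Form V n) (v : Fin n → V),
      act n A φ v = -∑ k, φ (Function.update v k (A (v k)))) :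
    (∀ (r : ℕ) (φ : Form V (r + 1)),
        ∑ a, iprodS (e a) (Rp act R e (e a) φ) = -Fop act R e φ) ∧
    (∀ (r : ℕ) (φ : Form V (r + 1)),
        ∑ a, eps (flat (e a)) (Rm act R e (e a) φ) = -Fop act R e φ) :=
  sum_interior_Rp_and_sum_wedge_Rm_eq_neg_F_general e R hRskew act hact

end
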